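/- Under the assumptions that every algorithm in 𝒜 has a strictly increasing or constant reward function and that 𝒜 is utility rich (the set {R_A(N) : A ∈ 𝒜} is an interval attaining its supremum, and some A' ∈ 𝒜 has R_{A'}(N) ≤ max_{A} R_A(1)), for every α in the interval [max_{A} R_A(1), max_A R_A(N)] there exists a symmetric platform Nash equilibrium (A, A) whose user quality level equals α. -/
import Mathlib


open Finset

/-- Number of users choosing platform 1 (encoded as `false`). -/
def count1 {N : ℕ} (p : Fin N → Bool) : ℕ := (univ.filter fun i => p i = false).card

/-- Number of users choosing platform 2 (encoded as `true`). -/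
def count2 {N : ℕ} (p : Fin N → Bool) : ℕ := (univ.filter fun i => p i = true).card

/-- Utility of user `i`: reward of their platform evaluated at that platform's user count. -/
def util {N : ℕ} (R1 R2 : ℕ → ℝ) (p : Fin N → Bool) (i : Fin N) : ℝ :=
  if p i then R2 (count2 p) else R1 (count1 p)

/-- Pure-strategy Nash equilibrium of the user platform-choice game. -/
def userNash {N : ℕ} (R1 R2 : ℕ → ℝ) (p : Fin N → Bool) : Prop :=
  ∀ i, util R1 R2 (Function.update p i (!(p i))) i ≤ util R1 R2 p i

/-- `R` is strictly increasing on `{1,...,N}`. -/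
def StrictIncrOn (R : ℕ → ℝ) (N : ℕ) : Prop :=
  ∀ m n, 1 ≤ m → m < n → n ≤ N → R m < R n

/-- `R` is constant on `{1,...,N}`. -/
def ConstOn (R : ℕ → ℝ) (N : ℕ) : Prop :=
  ∀ m n, 1 ≤ m → m ≤ N → 1 ≤ n → n ≤ N → R m = R n

/-- The set of pure user Nash equilibria when platforms run algorithms `A1`, `A2`. -/
def userEq (N : ℕ) {𝒜 : Type*} (R : 𝒜 → ℕ → ℝ) (A1 A2 : 𝒜) : Set (Fin N → Bool) :=
  {p | userNash (R A1) (R A2) p}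

/-- Platform 1's utility: minimum number of its users over pure user equilibria. -/
noncomputable def v1 (N : ℕ) {𝒜 : Type*} (R : 𝒜 → ℕ → ℝ) (A1 A2 : 𝒜) : ℕ :=
  sInf (count1 '' userEq N R A1 A2)

/-- Platform 2's utility: minimum number of its users over pure user equilibria. -/
noncomputable def v2 (N : ℕ) {𝒜 : Type*} (R : 𝒜 → ℕ → ℝ) (A1 A2 : 𝒜) : ℕ :=
  sInf (count2 '' userEq N R A1 A2)

/-- `(A1, A2)` is a pure Nash equilibrium of the platform game. -/
def platformNash (N : ℕ) {𝒜 : Type*} (R : 𝒜 → ℕ → ℝ) (A1 A2 : 𝒜) : Prop :=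
  (∀ A, v1 N R A A2 ≤ v1 N R A1 A2) ∧ (∀ A, v2 N R A1 A ≤ v2 N R A1 A2)

/-- User quality level: minimum user utility over pure user equilibria and users. -/
noncomputable def Q (N : ℕ) {𝒜 : Type*} (R : 𝒜 → ℕ → ℝ) (A1 A2 : 𝒜) : ℝ :=
  sInf {u | ∃ p ∈ userEq N R A1 A2, ∃ i, util (R A1) (R A2) p i = u}

section Helpers

variable {N : ℕ}

lemma count_add (p : Fin N → Bool) : count1 p + count2 p = N := by
  classical
  unfold count1 count2
  have h : (univ.filter fun i : Fin N => p i = true) = (univ.filter fun i => ¬ (p i = false)) := by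
    apply Finset.filter_congr; intros; simp
  rw [h, Finset.card_filter_add_card_filter_not, Finset.card_univ, Fintype.card_fin]

lemma one_le_count1 {p : Fin N → Bool} {i : Fin N} (h : p i = false) : 1 ≤ count1 p := by
  unfold count1; exact Finset.card_pos.2 ⟨i, by simp [h]⟩

lemma one_le_count2 {p : Fin N → Bool} {i : Fin N} (h : p i = true) : 1 ≤ count2 p := by
  unfold count2; exact Finset.card_pos.2 ⟨i, by simp [h]⟩

lemma count2_update {p : Fin N → Bool} {i : Fin N} (h : p i = false) :
    count2 (Function.update p i true) = count2 p + 1 := by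
  unfold count2
  have he : (univ.filter fun j => Function.update p i true j = true)
      = insert i (univ.filter fun j => p j = true) := by
    ext j
    rcases eq_or_ne j i with rfl | hj
    · simp
    · simp [Function.update_of_ne hj, hj]
  rw [he, Finset.card_insert_of_notMem (by simp [h])]

lemma count1_update {p : Fin N → Bool} {i : Fin N} (h : p i = true) :
    count1 (Function.update p i false) = count1 p + 1 := by
  unfold count1
  have he : (univ.filter fun j => Function.update p i false j = false)
      = insert i (univ.filter fun j => p j = false) := by
    ext j
    rcases eq_or_ne j i with rfl | hj
    · simp
    · simp [Function.update_of_ne hj, hj]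
  rw [he, Finset.card_insert_of_notMem (by simp [h])]

lemma count2_const_true : count2 (fun _ : Fin N => true) = N := by simp [count2]
lemma count1_const_true : count1 (fun _ : Fin N => true) = 0 := by simp [count1]
lemma count1_const_false : count1 (fun _ : Fin N => false) = N := by simp [count1]
lemma count2_const_false : count2 (fun _ : Fin N => false) = 0 := by simp [count2]

lemma exists_true_of_count2 {p : Fin N → Bool} (h : 1 ≤ count2 p) : ∃ k, p k = true := by
  obtain ⟨k, hk⟩ := Finset.card_pos.1 h
  exact ⟨k, by simpa using hk⟩

lemma exists_false_of_count1 {p : Fin N → Bool} (h : 1 ≤ count1 p) : ∃ k, p k = false := by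
  obtain ⟨k, hk⟩ := Finset.card_pos.1 h
  exact ⟨k, by simpa using hk⟩

lemma allTrue_nash {R1 R2 : ℕ → ℝ} (h : R1 1 ≤ R2 N) :
    userNash (N := N) R1 R2 (fun _ => true) := by
  intro i
  have h1 : Function.update (fun _ : Fin N => true) i (!(true : Bool)) i = false := by simp
  have h2 : count1 (Function.update (fun _ : Fin N => true) i (!(true : Bool))) = 1 := by
    have he : Function.update (fun _ : Fin N => true) i (!(true : Bool))
        = Function.update (fun _ : Fin N => true) i false := by simp
    rw [he, count1_update rfl, count1_const_true]
  simp only [util, h1, h2, if_false, Bool.false_eq_true, if_true, count2_const_true]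
  simpa using h

lemma allFalse_nash {R1 R2 : ℕ → ℝ} (h : R2 1 ≤ R1 N) :
    userNash (N := N) R1 R2 (fun _ => false) := by
  intro i
  have h1 : Function.update (fun _ : Fin N => false) i (!(false : Bool)) i = true := by simp
  have h2 : count2 (Function.update (fun _ : Fin N => false) i (!(false : Bool))) = 1 := by
    have he : Function.update (fun _ : Fin N => false) i (!(false : Bool))
        = Function.update (fun _ : Fin N => false) i true := by simp
    rw [he, count2_update rfl, count2_const_false]
  simp only [util, h1, h2, if_true, count1_const_false]
  simpa using h

/-- Nash inequality at a user on platform 1. -/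
lemma nash_false {R1 R2 : ℕ → ℝ} {p : Fin N → Bool} (hp : userNash R1 R2 p)
    {i : Fin N} (h : p i = false) : R2 (count2 p + 1) ≤ R1 (count1 p) := by
  have hi := hp i
  rw [h] at hi
  simpa [util, h, count2_update h] using hi

/-- Nash inequality at a user on platform 2. -/
lemma nash_true {R1 R2 : ℕ → ℝ} {p : Fin N → Bool} (hp : userNash R1 R2 p)
    {i : Fin N} (h : p i = true) : R1 (count1 p + 1) ≤ R2 (count2 p) := by
  have hi := hp i
  rw [h] at hi
  simpa [util, h, count1_update h] using hi

/-- In the strictly increasing case there are no mixed equilibria. -/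
lemma not_mixed {RA : ℕ → ℝ} (hs : StrictIncrOn RA N) {p : Fin N → Bool}
    (hp : userNash RA RA p) {j k : Fin N} (hj : p j = false) (hk : p k = true) : False := by
  have hsum := count_add p
  have h1 : 1 ≤ count1 p := one_le_count1 hj
  have h2 : 1 ≤ count2 p := one_le_count2 hk
  have e1 : RA (count2 p + 1) ≤ RA (count1 p) := nash_false hp hj
  have e2 : RA (count1 p + 1) ≤ RA (count2 p) := nash_true hp hk
  have l1 : count2 p + 1 ≤ count1 p := by
    by_contra hcon
    push_neg at hcon
    exact absurd e1 (not_le.2 (hs _ _ h1 (by omega) (by omega)))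
  have l2 : count1 p + 1 ≤ count2 p := by
    by_contra hcon
    push_neg at hcon
    exact absurd e2 (not_le.2 (hs _ _ h2 (by omega) (by omega)))
  omega

/-- In a symmetric game (A,A), every user's utility at equilibrium equals `R A N`. -/
lemma util_eq_of_nash {RA : ℕ → ℝ}
    (h : StrictIncrOn RA N ∨ ConstOn RA N) {p : Fin N → Bool}
    (hp : userNash RA RA p) (i : Fin N) : util RA RA p i = RA N := by
  have hsum := count_add p
  cases hpi : p i with
  | false =>
    have h1 : 1 ≤ count1 p := one_le_count1 hpi
    have huti : util RA RA p i = RA (count1 p) := by simp [util, hpi]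
    rw [huti]
    rcases h with hs | hc
    · have hc2 : count2 p = 0 := by
        by_contra hcon
        obtain ⟨k, hk⟩ := exists_true_of_count2 (p := p) (by omega)
        exact not_mixed hs hp hpi hk
      rw [show count1 p = N by omega]
    · exact hc _ _ h1 (by omega) (by omega) le_rfl
  | true =>
    have h2 : 1 ≤ count2 p := one_le_count2 hpi
    have huti : util RA RA p i = RA (count2 p) := by simp [util, hpi]
    rw [huti]
    rcases h with hs | hc
    · have hc1 : count1 p = 0 := by
        by_contra hcon
        obtain ⟨k, hk⟩ := exists_false_of_count1 (p := p) (by omega)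
        exact not_mixed hs hp hk hpi
      rw [show count2 p = N by omega]
    · exact hc _ _ h2 (by omega) (by omega) le_rfl

end Helpers

/-- under information monotonicity and utility richness, every value
`α ∈ [max_A R A 1, max_A R A N]` is the user quality level of some symmetric platform
Nash equilibrium. -/
theorem realizable_quality_levels (N : ℕ) (hN : 1 ≤ N) {𝒜 : Type*}
    (R : 𝒜 → ℕ → ℝ)
    (hmono : ∀ A, StrictIncrOn (R A) N ∨ ConstOn (R A) N)
    (Amax1 : 𝒜) (hmax1 : ∀ A, R A 1 ≤ R Amax1 1)
    (AmaxN : 𝒜) (hmaxN : ∀ A, R A N ≤ R AmaxN N)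
    (hinterval : Set.OrdConnected {x : ℝ | ∃ A, R A N = x})
    (hrich : ∃ A', R A' N ≤ R Amax1 1)
    (α : ℝ) (hα : α ∈ Set.Icc (R Amax1 1) (R AmaxN N)) :
    ∃ A : 𝒜, platformNash N R A A ∧ Q N R A A = α := by
  obtain ⟨A', hA'⟩ := hrich
  obtain ⟨hα1, hα2⟩ := hα
  obtain ⟨A, hA⟩ : α ∈ {x : ℝ | ∃ A, R A N = x} :=
    hinterval.out ⟨A', rfl⟩ ⟨AmaxN, rfl⟩ ⟨le_trans hA' hα1, hα2⟩
  have hkey : ∀ B, R B 1 ≤ R A N := fun B => by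
    rw [hA]; exact le_trans (hmax1 B) hα1
  refine ⟨A, ⟨?_, ?_⟩, ?_⟩
  · intro B
    have h0 : v1 N R B A = 0 := by
      have hmem0 : 0 ∈ count1 '' userEq N R B A :=
        ⟨fun _ => true, allTrue_nash (hkey B), count1_const_true⟩
      exact Nat.le_zero.1 (Nat.sInf_le hmem0)
    rw [h0]
    exact Nat.zero_le _
  · intro B
    have h0 : v2 N R A B = 0 := by
      have hmem0 : 0 ∈ count2 '' userEq N R A B :=
        ⟨fun _ => false, allFalse_nash (hkey B), count2_const_false⟩
      exact Nat.le_zero.1 (Nat.sInf_le hmem0)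
    rw [h0]
    exact Nat.zero_le _
  · have hS : {u | ∃ p ∈ userEq N R A A, ∃ i, util (R A) (R A) p i = u} = {α} := by
      apply Set.eq_singleton_iff_unique_mem.2
      constructor
      · refine ⟨fun _ => true, allTrue_nash (hkey A), ⟨0, hN⟩, ?_⟩
        simp [util, count2_const_true, hA]
      · rintro x ⟨p, hp, i, rfl⟩
        rw [util_eq_of_nash (hmono A) hp i, hA]
    rw [Q, hS]
    exact csInf_singleton α
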